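/- Let ξ < 2, a₀ > 0, β ∈ ℝ, and set b₀ = β a₀ and α = β - ξ. Define, for r > 0 and t > 0, P(r,t) = t^{-(α+1)/(2-ξ)} · r^{α} · exp( - r^{2-ξ} / ((2-ξ)² a₀ t) ). Then P solves the forward Kolmogorov equation of the two-particle distance process: for all r > 0, t > 0, ∂P/∂t (r,t) = ∂²/∂r² ( a₀ r^ξ P(r,t) ) - ∂/∂r ( b₀ r^{ξ-1} P(r,t) ). In particular the two-particle transition density in the scale-invariant Kraichnan model behaves like C ρ^{α} |s|^{-(α+1)/(2-ξ)} at large times, the decay estimate underlying the one force–one solution principle in the limit of infinite velocity correlation length. -/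

import Mathlib

/-!
For fixed `t`, `P(ρ, t) = t^c Φ_α(ρ)` with `Φ_g(ρ) = ρ^g e^{-Cρ^m}`, `m = 2 - ξ`,
`c = -(α+1)/m` and `C = 1/(m² a₀ t)`. Differentiation only changes the prefactor of these
profiles, `Φ_g' = (g ρ^{-m} - C m) Φ_{g+m-1}`. As `a₀ ρ^ξ P` and `b₀ ρ^{ξ-1} P` are
multiples of `Φ_β` and `Φ_{β-1}`, both sides of the equation become a Laurent polynomial in
`ρ^m` times `Φ_α`. On the right the `ρ^{-m}` coefficient is `a₀ β (β-1) - b₀ (β-1) = 0`, and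
the other two coefficients equal those of `∂P/∂t` because of the choice of `c` and of the
width `m² a₀ t`.
-/

open Filter Topology Real

noncomputable section

namespace Kraichnan

def profile (C m g : ℝ) (ρ : ℝ) : ℝ := ρ ^ g * exp (-C * ρ ^ m)

variable {C m g x : ℝ}

lemma profile_add_rpow (hx : 0 < x) (h : ℝ) :
    profile C m (g + h) x = x ^ h * profile C m g x := by
  simp only [profile, rpow_add hx]; ring

lemma hasDerivAt_profile (hx : 0 < x) :
    HasDerivAt (profile C m g)
      (g * profile C m (g - 1) x - C * m * profile C m (g + m - 1) x) x := by
  have hpow (p : ℝ) : HasDerivAt (fun ρ : ℝ => ρ ^ p) (p * x ^ (p - 1)) x :=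
    hasDerivAt_rpow_const (Or.inl hx.ne')
  refine ((hpow g).mul (((hpow m).const_mul (-C)).exp)).congr_deriv ?_
  simp only [profile, add_sub_assoc, rpow_add hx]
  ring

lemma deriv_profile_eventuallyEq (hx : 0 < x) :
    deriv (profile C m g) =ᶠ[𝓝 x]
      fun ρ => g * profile C m (g - 1) ρ - C * m * profile C m (g + m - 1) ρ :=
  (eventually_gt_nhds hx).mono fun _ hρ => (hasDerivAt_profile hρ).deriv

lemma deriv_profile (hx : 0 < x) :
    deriv (profile C m g) x = (g * x ^ (-m) - C * m) * profile C m (g + m - 1) x := by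
  rw [(hasDerivAt_profile hx).deriv, show g - 1 = g + m - 1 + -m by ring, profile_add_rpow hx]
  ring

lemma deriv_deriv_profile (hx : 0 < x) :
    deriv (deriv (profile C m g)) x =
      (g * (g - 1) * x ^ (-m) - C * m * (2 * g + m - 1) + (C * m) ^ 2 * x ^ m)
        * profile C m (g + m - 2) x := by
  have hderiv : HasDerivAt
      (fun ρ => g * profile C m (g - 1) ρ - C * m * profile C m (g + m - 1) ρ) _ x :=
    ((hasDerivAt_profile hx).const_mul g).sub ((hasDerivAt_profile hx).const_mul (C * m))
  rw [(deriv_profile_eventuallyEq hx).deriv_eq, hderiv.deriv,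
    show g - 1 - 1 = g + m - 2 + -m by ring, show g - 1 + m - 1 = g + m - 2 by ring,
    show g + m - 1 - 1 = g + m - 2 by ring, show g + m - 1 + m - 1 = g + m - 2 + m by ring,
    profile_add_rpow hx, profile_add_rpow hx]
  ring

lemma hasDerivAt_rpow_mul_exp_neg_div (A K c : ℝ) {t : ℝ} (ht : t ≠ 0) :
    HasDerivAt (fun s : ℝ => s ^ c * exp (-A / (K * s)))
      ((c / t + A / (K * t ^ 2)) * (t ^ c * exp (-A / (K * t)))) t := by
  have hexp : HasDerivAt (fun s : ℝ => -A / (K * s)) (A / (K * t ^ 2)) t := by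
    rw [show (fun s : ℝ => -A / (K * s)) = fun s => -A / K * s⁻¹ by funext s; ring]
    exact ((hasDerivAt_inv ht).const_mul (-A / K)).congr_deriv (by ring)
  refine ((hasDerivAt_rpow_const (Or.inl ht)).mul hexp.exp).congr_deriv ?_
  rw [rpow_sub_one ht]
  field_simp

/-- The self-similar solution `P(ρ, t)`, with `α = β - ξ`. -/
def density (ξ a₀ α ρ t : ℝ) : ℝ :=
  t ^ (-(α + 1) / (2 - ξ)) * ρ ^ α * exp (-(ρ ^ (2 - ξ)) / ((2 - ξ) ^ 2 * a₀ * t))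

variable {ξ a₀ α r t : ℝ}

lemma density_eq_profile (ρ : ℝ) :
    density ξ a₀ α ρ t =
      t ^ (-(α + 1) / (2 - ξ)) * profile ((2 - ξ) ^ 2 * a₀ * t)⁻¹ (2 - ξ) α ρ := by
  rw [density, profile, mul_assoc, neg_mul, ← div_eq_inv_mul, neg_div _ (ρ ^ (2 - ξ))]

lemma rpow_mul_density (hr : 0 < r) (h : ℝ) :
    r ^ h * density ξ a₀ α r t =
      t ^ (-(α + 1) / (2 - ξ)) * profile ((2 - ξ) ^ 2 * a₀ * t)⁻¹ (2 - ξ) (α + h) r := by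
  rw [density_eq_profile, profile_add_rpow hr]
  ring

lemma hasDerivAt_density_time (ht : t ≠ 0) :
    HasDerivAt (fun s => density ξ a₀ α r s)
      ((-(α + 1) / (2 - ξ) / t + r ^ (2 - ξ) / ((2 - ξ) ^ 2 * a₀ * t ^ 2))
        * density ξ a₀ α r t) t := by
  have h := (hasDerivAt_rpow_mul_exp_neg_div (r ^ (2 - ξ)) ((2 - ξ) ^ 2 * a₀)
    (-(α + 1) / (2 - ξ)) ht).const_mul (r ^ α)
  refine HasDerivAt.congr_of_eventuallyEq (h.congr_deriv (by simp only [density]; ring))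
    (Eventually.of_forall fun s => ?_)
  simp only [density]
  ring

lemma deriv_deriv_diffusion (hr : 0 < r) :
    deriv (deriv fun ρ => a₀ * ρ ^ ξ * density ξ a₀ α ρ t) r =
      a₀ * ((α + ξ) * (α + ξ - 1) * r ^ (-(2 - ξ))
        - ((2 - ξ) ^ 2 * a₀ * t)⁻¹ * (2 - ξ) * (2 * (α + ξ) + (2 - ξ) - 1)
        + (((2 - ξ) ^ 2 * a₀ * t)⁻¹ * (2 - ξ)) ^ 2 * r ^ (2 - ξ))
        * density ξ a₀ α r t := by
  have heq : (fun ρ => a₀ * ρ ^ ξ * density ξ a₀ α ρ t) =ᶠ[𝓝 r] fun ρ =>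
      a₀ * t ^ (-(α + 1) / (2 - ξ))
        * profile ((2 - ξ) ^ 2 * a₀ * t)⁻¹ (2 - ξ) (α + ξ) ρ :=
    (eventually_gt_nhds hr).mono fun ρ hρ => by
      dsimp only; rw [mul_assoc a₀, rpow_mul_density hρ, mul_assoc a₀]
  rw [heq.deriv.deriv_eq]
  simp only [deriv_const_mul_field']
  rw [deriv_deriv_profile hr, show α + ξ + (2 - ξ) - 2 = α by ring, density_eq_profile]
  ring

lemma deriv_drift (hr : 0 < r) (b : ℝ) :
    deriv (fun ρ => b * ρ ^ (ξ - 1) * density ξ a₀ α ρ t) r =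
      b * ((α + (ξ - 1)) * r ^ (-(2 - ξ)) - ((2 - ξ) ^ 2 * a₀ * t)⁻¹ * (2 - ξ))
        * density ξ a₀ α r t := by
  have heq : (fun ρ => b * ρ ^ (ξ - 1) * density ξ a₀ α ρ t) =ᶠ[𝓝 r] fun ρ =>
      b * t ^ (-(α + 1) / (2 - ξ))
        * profile ((2 - ξ) ^ 2 * a₀ * t)⁻¹ (2 - ξ) (α + (ξ - 1)) ρ :=
    (eventually_gt_nhds hr).mono fun ρ hρ => by
      dsimp only; rw [mul_assoc b, rpow_mul_density hρ, mul_assoc b]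
  rw [heq.deriv_eq]
  simp only [deriv_const_mul_field']
  rw [deriv_profile hr, show α + (ξ - 1) + (2 - ξ) - 1 = α by ring, density_eq_profile]
  ring

end Kraichnan

open Kraichnan

/-- For `ξ < 2`, `a₀ > 0`, `b₀ = β a₀` and `α = β - ξ`, the
function `P(r,t) = t^(-(α+1)/(2-ξ)) · r^α · exp(-r^(2-ξ)/((2-ξ)² a₀ t))` solves
the forward Kolmogorov equation of the two-particle distance process:
`∂P/∂t = ∂²/∂r²(a₀ r^ξ P) - ∂/∂r(b₀ r^(ξ-1) P)` for all `r > 0, t > 0`. This is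
the self-similar transition density `C ρ^α |s|^(-(α+1)/(2-ξ))` underlying the one
force–one solution principle at infinite velocity correlation length. -/
theorem kraichnan_selfsimilar_transition_density
    (ξ a₀ β b₀ α : ℝ) (hξ : ξ < 2) (ha₀ : 0 < a₀)
    (hb₀ : b₀ = β * a₀) (hα : α = β - ξ)
    (P : ℝ → ℝ → ℝ)
    (hP : P = fun r t =>
      t ^ (-(α + 1) / (2 - ξ)) * r ^ α *
        Real.exp (-(r ^ (2 - ξ)) / ((2 - ξ) ^ 2 * a₀ * t))) :
    ∀ r t : ℝ, 0 < r → 0 < t →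
      deriv (fun s : ℝ => P r s) t
        = deriv (deriv (fun ρ : ℝ => a₀ * ρ ^ ξ * P ρ t)) r
          - deriv (fun ρ : ℝ => b₀ * ρ ^ (ξ - 1) * P ρ t) r := by
  intro r t hr ht
  obtain rfl : β = α + ξ := by linarith
  subst hP hb₀
  change deriv (fun s => density ξ a₀ α r s) t
    = deriv (deriv fun ρ => a₀ * ρ ^ ξ * density ξ a₀ α ρ t) r
      - deriv (fun ρ => (α + ξ) * a₀ * ρ ^ (ξ - 1) * density ξ a₀ α ρ t) r
  have hm : 2 - ξ ≠ 0 := (sub_pos.2 hξ).ne'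
  rw [(hasDerivAt_density_time ht.ne').deriv, deriv_deriv_diffusion hr, deriv_drift hr,
    rpow_neg hr.le]
  field_simp
  ring
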